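/- arXiv:1505.02791 — 2 statements merged into one kernel-verified Lean document; each statement's English description precedes it below -/
import Mathlib

section
/- Assume the increments of the stopping time sequence $(\sigma_i)_{i\ge 0}$ satisfy $\Pr(\sigma_{i+1}-\sigma_i > n \mid \mathcal{F}_{\sigma_i}) \le C e^{-cn}$ a.s. for all $i,n$, where $C\ge 1$, $c>0$. Fix $t\in\mathbb{N}$ and let $\widetilde\tau^{(t)}_1$ denote the length of the interval $(\sigma_{R_t-1},\sigma_{R_t}]$ containing $t$, where $R_t = \inf\{i : \sigma_i \ge t\}$. Then there exist constants $C', c' \in (0,\infty)$ (depending only on $C,c$) such that for all $i$ and $n$, a.s. on $\{\sigma_i < t\}$, $\Pr(\widetilde\tau^{(t)}_1 \ge n \mid \mathcal{F}_{\sigma_i}) \le C'(1+n)e^{-c'n}$. -/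
open MeasureTheory

private lemma aux_geom_sum (c : ℝ) (hc : 0 < c) (n : ℕ) :
    ∀ t : ℕ, ∑ k ∈ Finset.range t, Real.exp (-c * ((k + 1 - n : ℕ) : ℝ))
      ≤ (1 + n) / (1 - Real.exp (-c)) := by
  have hr0 : (0:ℝ) ≤ Real.exp (-c) := (Real.exp_pos _).le
  have hr1 : Real.exp (-c) < 1 := by
    rw [Real.exp_lt_one_iff]; linarith
  set r := Real.exp (-c) with hr
  have hden : 0 < 1 - r := by linarith
  have hterm1 : ∀ k : ℕ, Real.exp (-c * ((k + 1 - n : ℕ) : ℝ)) ≤ 1 := by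
    intro k
    rw [Real.exp_le_one_iff]
    have : (0:ℝ) ≤ ((k + 1 - n : ℕ) : ℝ) := Nat.cast_nonneg _
    nlinarith
  intro t
  rcases le_or_gt t n with htn | hnt
  · calc ∑ k ∈ Finset.range t, Real.exp (-c * ((k + 1 - n : ℕ) : ℝ))
        ≤ ∑ _k ∈ Finset.range t, (1:ℝ) := Finset.sum_le_sum fun k _ => hterm1 k
      _ = t := by simp
      _ ≤ (n : ℝ) := by exact_mod_cast htn
      _ ≤ (1 + n) / (1 - r) := by
          rw [le_div_iff₀ hden]
          have hn0 : (0:ℝ) ≤ (n:ℝ) := Nat.cast_nonneg n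
          nlinarith
  · have hsplit : ∑ k ∈ Finset.range t, Real.exp (-c * ((k + 1 - n : ℕ) : ℝ))
        = (∑ k ∈ Finset.range n, Real.exp (-c * ((k + 1 - n : ℕ) : ℝ)))
          + ∑ k ∈ Finset.Ico n t, Real.exp (-c * ((k + 1 - n : ℕ) : ℝ)) := by
      rw [Finset.range_eq_Ico, Finset.range_eq_Ico]
      exact (Finset.sum_Ico_consecutive (fun k => Real.exp (-c * ((k + 1 - n : ℕ) : ℝ))) (Nat.zero_le n) hnt.le).symm
    rw [hsplit]
    have h1 : (∑ k ∈ Finset.range n, Real.exp (-c * ((k + 1 - n : ℕ) : ℝ))) ≤ n :=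
      (Finset.sum_le_sum fun k _ => hterm1 k).trans (by simp)
    have h2 : ∑ k ∈ Finset.Ico n t, Real.exp (-c * ((k + 1 - n : ℕ) : ℝ))
        ≤ r / (1 - r) := by
      rw [Finset.sum_Ico_eq_sum_range]
      have hval : ∀ k : ℕ, Real.exp (-c * ((n + k + 1 - n : ℕ) : ℝ)) = r * r ^ k := by
        intro k
        have hnk : (n + k + 1 - n : ℕ) = k + 1 := by omega
        rw [hnk, hr, ← Real.exp_nat_mul, ← Real.exp_add]
        congr 1
        push_cast
        ring
      calc ∑ k ∈ Finset.range (t - n), Real.exp (-c * ((n + k + 1 - n : ℕ) : ℝ))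
          = r * ∑ k ∈ Finset.range (t - n), r ^ k := by
            rw [Finset.mul_sum]; exact Finset.sum_congr rfl fun k _ => hval k
        _ ≤ r * (1 - r)⁻¹ := by
            refine mul_le_mul_of_nonneg_left ?_ hr0
            refine (Summable.sum_le_tsum _ (fun k _ => by positivity)
              (summable_geometric_of_lt_one hr0 hr1)).trans ?_
            rw [tsum_geometric_of_lt_one hr0 hr1]
        _ = r / (1 - r) := by rw [div_eq_mul_inv]
    have hn0 : (0:ℝ) ≤ (n:ℝ) := Nat.cast_nonneg n
    have hfin : (n : ℝ) + r / (1 - r) ≤ (1 + n) / (1 - r) := by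
      rw [le_div_iff₀ hden]
      have hrr : r / (1 - r) * (1 - r) = r := div_mul_cancel₀ _ hden.ne'
      nlinarith [mul_nonneg hr0 hn0, hrr]
    linarith

/-- Under uniform exponential conditional tail bounds for the increments of the
stopping times `σ_i`, the length `τ₁^{(t)}` of the interval `(σ_{R_t-1}, σ_{R_t}]`
containing `t` satisfies, on `{σ_i < t}`,
`Pr(τ₁^{(t)} ≥ n | F_{σ_i}) ≤ C' (1+n) e^{-c' n}`. -/
theorem stmt8 {Ω : Type*} {m0 : MeasurableSpace Ω} (μ : Measure Ω) [IsProbabilityMeasure μ]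
    (ℱ : Filtration ℕ m0) (σ : ℕ → Ω → ℕ)
    (hσ : ∀ i, IsStoppingTime ℱ (fun ω => (σ i ω : WithTop ℕ)))
    (hσ0 : ∀ ω, σ 0 ω = 0)
    (hmono : ∀ i ω, σ i ω < σ (i + 1) ω)
    (C c : ℝ) (hC : 1 ≤ C) (hc : 0 < c)
    (htail : ∀ i n : ℕ, ∀ᵐ ω ∂μ,
      (μ[Set.indicator {ω' | n < σ (i + 1) ω' - σ i ω'} (fun _ => (1 : ℝ))
          | (hσ i).measurableSpace]) ω ≤ C * Real.exp (-c * n))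
    (t : ℕ) (ht : 1 ≤ t)
    (R : Ω → ℕ)
    (hR : ∀ ω, t ≤ σ (R ω) ω ∧ ∀ j < R ω, σ j ω < t)
    (τ1 : Ω → ℕ)
    (hτ1 : ∀ ω, τ1 ω = σ (R ω) ω - σ (R ω - 1) ω) :
    ∃ C' c' : ℝ, 0 < C' ∧ 0 < c' ∧ ∀ i n : ℕ, ∀ᵐ ω ∂μ,
      σ i ω < t →
      (μ[Set.indicator {ω' | n ≤ τ1 ω'} (fun _ => (1 : ℝ))
          | (hσ i).measurableSpace]) ω ≤ C' * (1 + n) * Real.exp (-c' * n) := by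
  classical
  have hr1 : Real.exp (-c) < 1 := by rw [Real.exp_lt_one_iff]; linarith
  have hden : 0 < 1 - Real.exp (-c) := by linarith
  have hC0 : 0 < C := lt_of_lt_of_le one_pos hC
  refine ⟨C * Real.exp c / (1 - Real.exp (-c)), c, by positivity, hc, ?_⟩
  intro i n
  -- basic monotonicity facts
  have hσmono : ∀ ω, Monotone fun j => σ j ω := fun ω =>
    monotone_nat_of_le_succ fun j => (hmono j ω).le
  have hσstrict : ∀ ω, StrictMono fun j => σ j ω := fun ω =>
    strictMono_nat_of_lt_succ fun j => hmono j ω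
  have hjle : ∀ j ω, j ≤ σ j ω := by
    intro j ω
    induction j with
    | zero => exact Nat.zero_le _
    | succ j ih => exact Nat.succ_le_of_lt (lt_of_le_of_lt ih (hmono j ω))
  set F : ℕ → MeasurableSpace Ω := fun j => (hσ j).measurableSpace with hF
  have hFle : ∀ j, F j ≤ m0 := fun j => (hσ j).measurableSpace_le
  have hFmono : ∀ {a b : ℕ}, a ≤ b → F a ≤ F b := fun {a b} hab =>
    (hσ a).measurableSpace_mono (hσ b) fun ω => WithTop.coe_le_coe.mpr (hσmono ω hab)
  have hσmeasF : ∀ j, Measurable[F j] (σ j) := fun j =>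
    @measurable_to_countable' ℕ Ω _ _ (F j) (σ j) fun k => by
      convert (hσ j).measurableSet_eq' k using 1; ext ω; simp
  have hσmeas : ∀ j, Measurable (σ j) := fun j => (hσmeasF j).mono (hFle j) le_rfl
  -- measurability of R and τ1
  have hRval : ∀ ω r, (t ≤ σ r ω ∧ ∀ j < r, σ j ω < t) → R ω = r := by
    intro ω r hyp
    rcases lt_trichotomy (R ω) r with h | h | h
    · exact absurd ((hR ω).1) (not_le.mpr (hyp.2 _ h))
    · exact h
    · exact absurd hyp.1 (not_le.mpr ((hR ω).2 r h))
  have hRmeas : Measurable R := by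
    refine measurable_to_countable' fun r => ?_
    have hset : R ⁻¹' {r} = {ω | t ≤ σ r ω} ∩ ⋂ j ∈ Finset.range r, {ω | σ j ω < t} := by
      ext ω
      simp only [Set.mem_preimage, Set.mem_singleton_iff, Set.mem_inter_iff, Set.mem_iInter,
        Finset.mem_range, Set.mem_setOf_eq]
      constructor
      · rintro rfl; exact ⟨(hR ω).1, fun j hj => (hR ω).2 j hj⟩
      · rintro ⟨h1, h2⟩; exact hRval ω r ⟨h1, h2⟩
    rw [hset]
    exact ((hσmeas r) measurableSet_Ici).inter
      (MeasurableSet.biInter (Finset.range r).countable_toSet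
        fun j _ => (hσmeas j) measurableSet_Iio)
  have hτmeas : Measurable τ1 := by
    have hpair : Measurable fun p : Ω × ℕ => σ p.2 p.1 :=
      measurable_from_prod_countable_left fun j => hσmeas j
    have h1 : Measurable fun ω => σ (R ω) ω := hpair.comp (measurable_id.prodMk hRmeas)
    have h2 : Measurable fun ω => σ (R ω - 1) ω :=
      hpair.comp (measurable_id.prodMk (hRmeas.sub measurable_const))
    have hfun : τ1 = fun ω => σ (R ω) ω - σ (R ω - 1) ω := funext hτ1
    rw [hfun]
    exact h1.sub h2
  -- the events
  set E : ℕ → ℕ → Set Ω :=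
    fun j k => {ω' | (max n (t - k) - 1) < σ (j + 1) ω' - σ j ω'} with hE
  set A : ℕ → ℕ → Set Ω := fun j k => {ω' | σ j ω' = k} ∩ E j k with hA
  set P : Finset (ℕ × ℕ) := (Finset.Ico i t) ×ˢ (Finset.range t) with hP
  set D : ℕ → ℝ := fun k => C * Real.exp (-c * ((max n (t - k) - 1 : ℕ) : ℝ)) with hD
  set G : ℕ → ℕ → Ω → ℝ :=
    fun j k => μ[Set.indicator {ω' | σ j ω' = k} (fun _ => (1:ℝ)) | F i] with hG
  have hD0 : ∀ k, 0 ≤ D k := fun k => by rw [hD]; positivity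
  have hEmeas : ∀ j k, MeasurableSet (E j k) := by
    intro j k
    exact ((hσmeas (j + 1)).sub (hσmeas j)) measurableSet_Ioi
  have hsjk : ∀ j k, MeasurableSet[F j] {ω' | σ j ω' = k} := fun j k =>
    (hσmeasF j) (measurableSet_singleton k)
  have hsjk0 : ∀ j k, MeasurableSet {ω' | σ j ω' = k} := fun j k => hFle j _ (hsjk j k)
  have hAmeas : ∀ j k, MeasurableSet (A j k) := fun j k => (hsjk0 j k).inter (hEmeas j k)
  have hs0 : MeasurableSet[F i] {ω' | σ i ω' < t} := (hσmeasF i) measurableSet_Iio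
  have hTmeas : MeasurableSet {ω' | n ≤ τ1 ω'} := hτmeas measurableSet_Ici
  have int_ind : ∀ {s : Set Ω}, MeasurableSet s →
      Integrable (s.indicator fun _ => (1:ℝ)) μ := fun hs => (integrable_const 1).indicator hs
  set f : Ω → ℝ := Set.indicator {ω' | n ≤ τ1 ω'} (fun _ => (1 : ℝ)) with hf
  set g : Ω → ℝ := Set.indicator ({ω' | σ i ω' < t} ∩ {ω' | n ≤ τ1 ω'}) (fun _ => (1 : ℝ))
    with hg
  set S : Ω → ℝ := ∑ p ∈ P, Set.indicator (A p.1 p.2) (fun _ => (1 : ℝ)) with hS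
  have int_S : Integrable S μ := by
    rw [hS, Finset.sum_fn]
    exact integrable_finset_sum _ fun p _ => int_ind (hAmeas p.1 p.2)
  -- pointwise inclusion
  have hgS : g ≤ S := by
    intro ω
    by_cases hmem : ω ∈ ({ω' | σ i ω' < t} ∩ {ω' | n ≤ τ1 ω'})
    · obtain ⟨hσit, hnτ⟩ := hmem
      have hR1 : 1 ≤ R ω := by
        by_contra h
        have hR0 : R ω = 0 := by omega
        have h2 := (hR ω).1
        rw [hR0, hσ0 ω] at h2
        omega
      have hiR : i < R ω := by
        by_contra h
        have h2 : σ (R ω) ω ≤ σ i ω := hσmono ω (not_lt.mp h)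
        have h3 := (hR ω).1
        simp only [Set.mem_setOf_eq] at hσit
        omega
      set j := R ω - 1 with hj
      have hjR : j < R ω := by omega
      have hij : i ≤ j := by omega
      have hσjt : σ j ω < t := (hR ω).2 j hjR
      have hjt : j < t := lt_of_le_of_lt (hjle j ω) hσjt
      set k := σ j ω with hk
      have hkt : k < t := hσjt
      have hj1 : j + 1 = R ω := by omega
      have hττ : σ (j + 1) ω - σ j ω = τ1 ω := by rw [hj1, hτ1 ω]
      have hmem' : ω ∈ A j k := by
        rw [hA]
        refine ⟨rfl, ?_⟩
        show max n (t - k) - 1 < σ (j + 1) ω - σ j ω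
        rw [hττ]
        have h4' : t ≤ σ (j + 1) ω := by rw [hj1]; exact (hR ω).1
        have h1 : t - k ≤ τ1 ω := by
          have h6 := hmono j ω
          omega
        have h2 : max n (t - k) ≤ τ1 ω := max_le hnτ h1
        have h3 : 1 ≤ max n (t - k) := le_trans (by omega : 1 ≤ t - k) (le_max_right _ _)
        omega
      have hval : g ω = 1 := by
        rw [hg]
        exact Set.indicator_of_mem (Set.mem_inter hσit hnτ) _
      rw [hval, hS]
      have hpmem : (j, k) ∈ P := by
        rw [hP, Finset.mem_product]
        exact ⟨Finset.mem_Ico.mpr ⟨hij, hjt⟩, Finset.mem_range.mpr hkt⟩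
      calc (1:ℝ) = Set.indicator (A j k) (fun _ => (1:ℝ)) ω := by
            rw [Set.indicator_of_mem hmem']
        _ ≤ (∑ p ∈ P, Set.indicator (A p.1 p.2) (fun _ => (1:ℝ))) ω := by
            rw [Finset.sum_apply]
            refine Finset.single_le_sum (f := fun p : ℕ × ℕ =>
              Set.indicator (A p.1 p.2) (fun _ => (1:ℝ)) ω) (fun p _ => ?_) hpmem
            exact Set.indicator_nonneg (fun _ _ => zero_le_one) ω
    · rw [hg, Set.indicator_of_notMem hmem, hS, Finset.sum_apply]
      exact Finset.sum_nonneg fun p _ => Set.indicator_nonneg (fun _ _ => zero_le_one) ω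
  -- conditional expectation chain
  have h1 : μ[g | F i] =ᵐ[μ] Set.indicator {ω' | σ i ω' < t} (μ[f | F i]) := by
    have hgi : g = Set.indicator {ω' | σ i ω' < t} f := by
      rw [hg, hf, Set.indicator_indicator]
    rw [hgi]
    exact condExp_indicator (int_ind hTmeas) hs0
  have h3 : μ[g | F i] ≤ᵐ[μ] μ[S | F i] :=
    condExp_mono (int_ind (((hFle i) _ hs0).inter hTmeas)) int_S
      (Filter.Eventually.of_forall hgS)
  have h4 : μ[S | F i] =ᵐ[μ]
      ∑ p ∈ P, μ[Set.indicator (A p.1 p.2) (fun _ => (1:ℝ)) | F i] :=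
    condExp_finsetSum (fun p _ => int_ind (hAmeas p.1 p.2)) (F i)
  -- bound for each (j,k)
  have h5 : ∀ p : ℕ × ℕ, p ∈ P →
      μ[Set.indicator (A p.1 p.2) (fun _ => (1:ℝ)) | F i] ≤ᵐ[μ]
        fun ω => D p.2 * G p.1 p.2 ω := by
    rintro ⟨j, k⟩ hp
    rw [hP, Finset.mem_product, Finset.mem_Ico] at hp
    obtain ⟨⟨hij, _⟩, _⟩ := hp
    have htow : μ[Set.indicator (A j k) (fun _ => (1:ℝ)) | F i] =ᵐ[μ]
        μ[μ[Set.indicator (A j k) (fun _ => (1:ℝ)) | F j] | F i] :=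
      (condExp_condExp_of_le (hFmono hij) (hFle j)).symm
    have hinner : μ[Set.indicator (A j k) (fun _ => (1:ℝ)) | F j] ≤ᵐ[μ]
        fun ω => D k * Set.indicator {ω' | σ j ω' = k} (fun _ => (1:ℝ)) ω := by
      have heq : Set.indicator (A j k) (fun _ => (1:ℝ))
          = Set.indicator {ω' | σ j ω' = k} (Set.indicator (E j k) fun _ => (1:ℝ)) := by
        rw [Set.indicator_indicator, hA]
      rw [heq]
      have hci := condExp_indicator (m := F j) (μ := μ)
        (int_ind (hEmeas j k)) (hsjk j k)
      have htl := htail j (max n (t - k) - 1)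
      filter_upwards [hci, htl] with ω hω1 hω2
      rw [hω1]
      by_cases hωs : ω ∈ {ω' | σ j ω' = k}
      · rw [Set.indicator_of_mem hωs, Set.indicator_of_mem hωs]
        calc (μ[Set.indicator (E j k) (fun _ => (1:ℝ)) | F j]) ω
            ≤ C * Real.exp (-c * ((max n (t - k) - 1 : ℕ) : ℝ)) := by
              rw [hE]; exact hω2
          _ = D k * 1 := by rw [hD, mul_one]
      · rw [Set.indicator_of_notMem hωs, Set.indicator_of_notMem hωs, mul_zero]
    have houter : μ[μ[Set.indicator (A j k) (fun _ => (1:ℝ)) | F j] | F i] ≤ᵐ[μ]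
        μ[fun ω => D k * Set.indicator {ω' | σ j ω' = k} (fun _ => (1:ℝ)) ω | F i] :=
      condExp_mono integrable_condExp ((int_ind (hsjk0 j k)).const_mul (D k)) hinner
    have hsmul : μ[fun ω => D k * Set.indicator {ω' | σ j ω' = k} (fun _ => (1:ℝ)) ω | F i]
        =ᵐ[μ] fun ω => D k * G j k ω := by
      have hcs := condExp_smul (μ := μ) (m := F i) (D k)
        (Set.indicator {ω' | σ j ω' = k} (fun _ => (1:ℝ)))
      rw [hG]
      filter_upwards [hcs] with ω hω
      have : (fun ω => D k * Set.indicator {ω' | σ j ω' = k} (fun _ => (1:ℝ)) ω)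
          = (D k • Set.indicator {ω' | σ j ω' = k} (fun _ => (1:ℝ)) : Ω → ℝ) := by
        funext x; simp [smul_eq_mul]
      rw [this, hω]
      simp [smul_eq_mul]
    exact htow.le.trans (houter.trans hsmul.le)
  -- the sum over j of indicators of {σ j = k} is at most 1
  have h7 : ∀ k : ℕ, (∑ j ∈ Finset.Ico i t, G j k) ≤ᵐ[μ] fun _ => (1:ℝ) := by
    intro k
    have e1 : ∑ j ∈ Finset.Ico i t, G j k =ᵐ[μ]
        μ[∑ j ∈ Finset.Ico i t, Set.indicator {ω' | σ j ω' = k} (fun _ => (1:ℝ)) | F i] := by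
      rw [hG]
      exact (condExp_finsetSum (fun j _ => int_ind (hsjk0 j k)) (F i)).symm
    have hpt : ∀ ω, (∑ j ∈ Finset.Ico i t,
        Set.indicator {ω' | σ j ω' = k} (fun _ => (1:ℝ))) ω ≤ 1 := by
      intro ω
      rw [Finset.sum_apply]
      have hsum : ∑ j ∈ Finset.Ico i t, Set.indicator {ω' | σ j ω' = k} (fun _ => (1:ℝ)) ω
          = ∑ j ∈ Finset.Ico i t, (if σ j ω = k then (1:ℝ) else 0) :=
        Finset.sum_congr rfl fun j _ => by
          rw [Set.indicator_apply]; simp only [Set.mem_setOf_eq]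
      rw [hsum, Finset.sum_boole]
      have hcard : ((Finset.Ico i t).filter fun j => σ j ω = k).card ≤ 1 := by
        refine Finset.card_le_one.mpr fun a ha b hb => ?_
        rw [Finset.mem_filter] at ha hb
        exact (hσstrict ω).injective (ha.2.trans hb.2.symm)
      exact_mod_cast hcard
    have e2 : μ[∑ j ∈ Finset.Ico i t,
        Set.indicator {ω' | σ j ω' = k} (fun _ => (1:ℝ)) | F i] ≤ᵐ[μ]
        μ[(fun _ => (1:ℝ)) | F i] :=
      condExp_mono (integrable_finset_sum' _ fun j _ => int_ind (hsjk0 j k))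
        (integrable_const 1) (Filter.Eventually.of_forall hpt)
    rw [condExp_const (hFle i) (1:ℝ)] at e2
    exact e1.le.trans e2
  -- numeric bound
  have hnum : ∑ k ∈ Finset.range t, D k
      ≤ C * Real.exp c / (1 - Real.exp (-c)) * (1 + n) * Real.exp (-c * n) := by
    have hterm : ∀ k ∈ Finset.range t, D k
        = C * Real.exp c * Real.exp (-c * n) * Real.exp (-c * ((t - k - n : ℕ) : ℝ)) := by
      intro k hk
      rw [Finset.mem_range] at hk
      have htk1 : 1 ≤ t - k := by omega
      have hm1 : 1 ≤ max n (t - k) := le_trans htk1 (le_max_right _ _)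
      have hsplit : max n (t - k) = t - k - n + n := by
        rcases le_total n (t - k) with h | h
        · rw [max_eq_right h]; omega
        · rw [max_eq_left h]; omega
      have hcast : ((max n (t - k) - 1 : ℕ) : ℝ) = ((t - k - n : ℕ) : ℝ) + n - 1 := by
        rw [Nat.cast_sub hm1, hsplit]
        push_cast
        ring
      rw [hD]
      simp only
      rw [hcast, show -c * (((t - k - n : ℕ) : ℝ) + n - 1)
          = c + -c * n + -c * ((t - k - n : ℕ) : ℝ) from by ring,
        Real.exp_add, Real.exp_add]
      ring
    rw [Finset.sum_congr rfl hterm, ← Finset.mul_sum]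
    have hrefl : ∑ k ∈ Finset.range t, Real.exp (-c * ((t - k - n : ℕ) : ℝ))
        = ∑ k ∈ Finset.range t, Real.exp (-c * ((k + 1 - n : ℕ) : ℝ)) := by
      rw [← Finset.sum_range_reflect (fun k => Real.exp (-c * ((k + 1 - n : ℕ) : ℝ))) t]
      refine Finset.sum_congr rfl fun k hk => ?_
      rw [Finset.mem_range] at hk
      have hkk : t - 1 - k + 1 - n = t - k - n := by omega
      rw [hkk]
    rw [hrefl]
    calc C * Real.exp c * Real.exp (-c * n)
          * ∑ k ∈ Finset.range t, Real.exp (-c * ((k + 1 - n : ℕ) : ℝ))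
        ≤ C * Real.exp c * Real.exp (-c * n) * ((1 + n) / (1 - Real.exp (-c))) := by
          refine mul_le_mul_of_nonneg_left (aux_geom_sum c hc n t) ?_
          positivity
      _ = C * Real.exp c / (1 - Real.exp (-c)) * (1 + n) * Real.exp (-c * n) := by
          field_simp
  -- combine the a.e. statements
  have h5' : ∀ᵐ ω ∂μ, ∀ p : ℕ × ℕ, p ∈ P →
      (μ[Set.indicator (A p.1 p.2) (fun _ => (1:ℝ)) | F i]) ω ≤ D p.2 * G p.1 p.2 ω := by
    rw [ae_all_iff]
    intro p
    by_cases hp : p ∈ P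
    · filter_upwards [h5 p hp] with ω hω _
      exact hω
    · exact Filter.Eventually.of_forall fun ω hp' => absurd hp' hp
  have h7' : ∀ᵐ ω ∂μ, ∀ k : ℕ, k ∈ Finset.range t →
      (∑ j ∈ Finset.Ico i t, G j k) ω ≤ 1 := by
    rw [ae_all_iff]
    intro k
    by_cases hk : k ∈ Finset.range t
    · filter_upwards [h7 k] with ω hω _
      exact hω
    · exact Filter.Eventually.of_forall fun ω hk' => absurd hk' hk
  filter_upwards [h1, h3, h4, h5', h7'] with ω hω1 hω3 hω4 hω5 hω7
  intro hσit
  have hmem0 : ω ∈ {ω' | σ i ω' < t} := hσit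
  have e0 : (μ[f | F i]) ω = (μ[g | F i]) ω := by
    rw [hω1]
    exact (Set.indicator_of_mem hmem0 _).symm
  calc (μ[f | F i]) ω = (μ[g | F i]) ω := e0
    _ ≤ (μ[S | F i]) ω := hω3
    _ = (∑ p ∈ P, μ[Set.indicator (A p.1 p.2) (fun _ => (1:ℝ)) | F i]) ω := hω4
    _ = ∑ p ∈ P, (μ[Set.indicator (A p.1 p.2) (fun _ => (1:ℝ)) | F i]) ω :=
        Finset.sum_apply _ _ _
    _ ≤ ∑ p ∈ P, D p.2 * G p.1 p.2 ω := Finset.sum_le_sum fun p hp => hω5 p hp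
    _ = ∑ j ∈ Finset.Ico i t, ∑ k ∈ Finset.range t, D k * G j k ω := by
        rw [hP, Finset.sum_product]
    _ = ∑ k ∈ Finset.range t, ∑ j ∈ Finset.Ico i t, D k * G j k ω := Finset.sum_comm
    _ = ∑ k ∈ Finset.range t, D k * ∑ j ∈ Finset.Ico i t, G j k ω := by
        refine Finset.sum_congr rfl fun k _ => ?_
        rw [Finset.mul_sum]
    _ ≤ ∑ k ∈ Finset.range t, D k * 1 := by
        refine Finset.sum_le_sum fun k hk => ?_
        refine mul_le_mul_of_nonneg_left ?_ (hD0 k)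
        have := hω7 k hk
        rwa [Finset.sum_apply] at this
    _ = ∑ k ∈ Finset.range t, D k := by simp
    _ ≤ C * Real.exp c / (1 - Real.exp (-c)) * (1 + n) * Real.exp (-c * n) := hnum
end

section
/- Under the same hypotheses, for $m\ge 1$ let $\widetilde\tau^{(t)}_m := \sigma_{R_t-m+1} - \sigma_{R_t-m}$ if $m\le R_t$ and $0$ otherwise. Then there exist $C', c'\in(0,\infty)$ such that for all $i, m, n$, a.s. on $\{\sigma_i < t\}$, $\Pr(R_t \ge i+m,\ \widetilde\tau^{(t)}_m \ge n \mid \mathcal{F}_{\sigma_i}) \le C' m^2 e^{-c' n}$. -/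
open MeasureTheory

/-- Under the same hypotheses, for `m ≥ 1`, on `{σ_i < t}`,
`Pr(R_t ≥ i + m, τ_m^{(t)} ≥ n | F_{σ_i}) ≤ C' m² e^{-c' n}`. -/
theorem stmt9 {Ω : Type*} {m0 : MeasurableSpace Ω} (μ : Measure Ω) [IsProbabilityMeasure μ]
    (ℱ : Filtration ℕ m0) (σ : ℕ → Ω → ℕ)
    (hσ : ∀ i, IsStoppingTime ℱ (fun ω => (σ i ω : WithTop ℕ)))
    (hσ0 : ∀ ω, σ 0 ω = 0)
    (hmono : ∀ i ω, σ i ω < σ (i + 1) ω)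
    (C c : ℝ) (hC : 1 ≤ C) (hc : 0 < c)
    (htail : ∀ i n : ℕ, ∀ᵐ ω ∂μ,
      (μ[Set.indicator {ω' | n < σ (i + 1) ω' - σ i ω'} (fun _ => (1 : ℝ))
          | (hσ i).measurableSpace]) ω ≤ C * Real.exp (-c * n))
    (t : ℕ) (ht : 1 ≤ t)
    (R : Ω → ℕ)
    (hR : ∀ ω, t ≤ σ (R ω) ω ∧ ∀ j < R ω, σ j ω < t)
    (τ : ℕ → Ω → ℕ)
    (hτ : ∀ m ω, τ m ω =
      if m ≤ R ω then σ (R ω - m + 1) ω - σ (R ω - m) ω else 0) :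
    ∃ C' c' : ℝ, 0 < C' ∧ 0 < c' ∧ ∀ i m n : ℕ, 1 ≤ m → ∀ᵐ ω ∂μ,
      σ i ω < t →
      (μ[Set.indicator {ω' | i + m ≤ R ω' ∧ n ≤ τ m ω'} (fun _ => (1 : ℝ))
          | (hσ i).measurableSpace]) ω ≤ C' * (m : ℝ) ^ 2 * Real.exp (-c' * n) := by
  -- basic measurability facts
  have hσmeas : ∀ k, Measurable (σ k) := fun k => by
    have h := (hσ k).measurable.mono (hσ k).measurableSpace_le le_rfl
    refine measurable_to_countable' fun n => ?_
    have : σ k ⁻¹' {n} = (fun ω => (σ k ω : WithTop ℕ)) ⁻¹' {(n : WithTop ℕ)} := by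
      ext; simp
    rw [this]; exact h (measurableSet_singleton _)
  -- monotonicity of σ
  have hσle : ∀ i j : ℕ, i ≤ j → ∀ ω, σ i ω ≤ σ j ω := by
    intro i j hij ω
    induction j, hij using Nat.le_induction with
    | base => exact le_rfl
    | succ j hij ih => exact ih.trans (hmono j ω).le
  have hσge : ∀ k ω, k ≤ σ k ω := by
    intro k ω
    induction k with
    | zero => exact Nat.zero_le _
    | succ k ih => exact Nat.succ_le_of_lt (lt_of_le_of_lt ih (hmono k ω))
  -- fibers of R are measurable
  have hRfiber : ∀ k, MeasurableSet (R ⁻¹' {k}) := by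
    intro k
    have : R ⁻¹' {k} = {ω | t ≤ σ k ω} ∩ ⋂ j ∈ Finset.range k, {ω | σ j ω < t} := by
      ext ω
      simp only [Set.mem_preimage, Set.mem_singleton_iff, Set.mem_inter_iff, Set.mem_iInter,
        Set.mem_setOf_eq, Finset.mem_range]
      constructor
      · rintro rfl; exact ⟨(hR ω).1, fun j hj => (hR ω).2 j hj⟩
      · rintro ⟨h1, h2⟩
        by_contra hne
        rcases Nat.lt_or_ge (R ω) k with h | h
        · exact absurd (h2 _ h) (not_lt.mpr (hR ω).1)
        · exact absurd ((hR ω).2 k (lt_of_le_of_ne h (Ne.symm hne))) (not_lt.mpr h1)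
    rw [this]
    exact (measurableSet_le measurable_const (hσmeas k)).inter
      (MeasurableSet.biInter (Set.to_countable _) fun j _ =>
        measurableSet_lt (hσmeas j) measurable_const)
  refine ⟨(t + 1) * C * Real.exp c, c, by positivity, hc, ?_⟩
  intro i m n hm
  -- the target event
  set E : Set Ω := {ω' | i + m ≤ R ω' ∧ n ≤ τ m ω'} with hE
  have hEmeas : MeasurableSet[m0] E := by
    have : E = ⋃ k, (R ⁻¹' {k} ∩
        {ω | i + m ≤ k ∧ n ≤ σ (k - m + 1) ω - σ (k - m) ω}) := by
      ext ω
      simp only [hE, Set.mem_setOf_eq, Set.mem_iUnion, Set.mem_inter_iff, Set.mem_preimage,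
        Set.mem_singleton_iff]
      constructor
      · rintro ⟨h1, h2⟩
        refine ⟨R ω, rfl, h1, ?_⟩
        rw [hτ m ω, if_pos (le_trans (Nat.le_add_left m i) h1)] at h2
        exact h2
      · rintro ⟨k, rfl, h1, h2⟩
        refine ⟨h1, ?_⟩
        rw [hτ m ω, if_pos (le_trans (Nat.le_add_left m i) h1)]
        exact h2
    rw [this]
    refine MeasurableSet.iUnion fun k => (hRfiber k).inter ?_
    by_cases hk : i + m ≤ k
    · have : {ω | i + m ≤ k ∧ n ≤ σ (k - m + 1) ω - σ (k - m) ω}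
          = {ω | n ≤ σ (k - m + 1) ω - σ (k - m) ω} := by
        ext ω; simp [hk]
      rw [this]
      exact measurableSet_le measurable_const ((hσmeas _).sub (hσmeas _))
    · have : {ω | i + m ≤ k ∧ n ≤ σ (k - m + 1) ω - σ (k - m) ω} = ∅ := by
        ext ω; simp [hk]
      rw [this]; exact MeasurableSet.empty
  -- auxiliary events
  set A : ℕ → Set Ω := fun j => {ω' | n - 1 < σ (j + 1) ω' - σ j ω'} with hA
  have hAmeas : ∀ j, MeasurableSet[m0] (A j) :=
    fun j => measurableSet_lt measurable_const ((hσmeas _).sub (hσmeas _))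
  -- pointwise bound by a sum of indicators
  have hpt : ∀ ω, Set.indicator E (fun _ => (1 : ℝ)) ω ≤
      ∑ j ∈ Finset.Ico i (i + t), Set.indicator (A j) (fun _ => (1 : ℝ)) ω := by
    intro ω
    by_cases hω : ω ∈ E
    · obtain ⟨h1, h2⟩ := hω
      have hmR : m ≤ R ω := le_trans (Nat.le_add_left m i) h1
      have hR1 : 1 ≤ R ω := le_trans hm hmR
      have hmem : R ω - m ∈ Finset.Ico i (i + t) := by
        refine Finset.mem_Ico.mpr ⟨by omega, ?_⟩
        have h3 : σ (R ω - 1) ω < t := (hR ω).2 _ (by omega)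
        have h4 : R ω - 1 ≤ σ (R ω - 1) ω := hσge _ ω
        omega
      have hAω : ω ∈ A (R ω - m) := by
        rw [hτ m ω, if_pos hmR] at h2
        simp only [hA, Set.mem_setOf_eq]
        have := hmono (R ω - m) ω
        omega
      calc Set.indicator E (fun _ => (1 : ℝ)) ω = 1 :=
            Set.indicator_of_mem (show ω ∈ E from ⟨h1, h2⟩) fun _ => (1 : ℝ)
        _ = Set.indicator (A (R ω - m)) (fun _ => (1 : ℝ)) ω :=
            (Set.indicator_of_mem hAω fun _ => (1 : ℝ)).symm
        _ ≤ _ := Finset.single_le_sum (f := fun j =>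
            Set.indicator (A j) (fun _ => (1 : ℝ)) ω)
            (fun j _ => Set.indicator_nonneg (fun _ _ => zero_le_one) ω) hmem
    · rw [Set.indicator_of_notMem hω]
      exact Finset.sum_nonneg fun j _ => Set.indicator_nonneg (fun _ _ => zero_le_one) ω
  -- integrability
  have hEint : Integrable (Set.indicator E (fun _ => (1 : ℝ))) μ :=
    (integrable_const (1 : ℝ)).indicator hEmeas
  have hAint : ∀ j, Integrable (Set.indicator (A j) (fun _ => (1 : ℝ))) μ :=
    fun j => (integrable_const (1 : ℝ)).indicator (hAmeas j)
  set mi := (hσ i).measurableSpace with hmidef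
  have hmi : mi ≤ m0 := (hσ i).measurableSpace_le
  -- bound on each conditional expectation
  have hAbound : ∀ j ∈ Finset.Ico i (i + t), ∀ᵐ ω ∂μ,
      (μ[Set.indicator (A j) (fun _ => (1 : ℝ)) | mi]) ω
        ≤ C * Real.exp c * Real.exp (-c * n) := by
    intro j hj
    have hij : i ≤ j := (Finset.mem_Ico.mp hj).1
    have hle : (fun ω => (σ i ω : WithTop ℕ)) ≤ fun ω => (σ j ω : WithTop ℕ) :=
      fun ω => WithTop.coe_le_coe.mpr (hσle i j hij ω)
    have hmimj : mi ≤ (hσ j).measurableSpace :=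
      IsStoppingTime.measurableSpace_mono (hσ i) (hσ j) hle
    have htower : μ[Set.indicator (A j) (fun _ => (1 : ℝ)) | mi]
        =ᵐ[μ] μ[μ[Set.indicator (A j) (fun _ => (1 : ℝ)) | (hσ j).measurableSpace] | mi] :=
      (condExp_condExp_of_le hmimj (hσ j).measurableSpace_le).symm
    have hb1 : ∀ᵐ ω ∂μ,
        (μ[Set.indicator (A j) (fun _ => (1 : ℝ)) | (hσ j).measurableSpace]) ω
          ≤ C * Real.exp (-c * (n - 1 : ℕ)) := htail j (n - 1)
    have hb2 : μ[μ[Set.indicator (A j) (fun _ => (1 : ℝ)) | (hσ j).measurableSpace] | mi]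
        ≤ᵐ[μ] μ[(fun _ => C * Real.exp (-c * (n - 1 : ℕ))) | mi] :=
      condExp_mono integrable_condExp (integrable_const _) hb1
    have hb3 : μ[(fun _ => C * Real.exp (-c * (n - 1 : ℕ))) | mi]
        = fun _ => C * Real.exp (-c * (n - 1 : ℕ)) := condExp_const hmi _
    have hconst : C * Real.exp (-c * (n - 1 : ℕ)) ≤ C * Real.exp c * Real.exp (-c * n) := by
      rcases Nat.eq_zero_or_pos n with rfl | hn
      · simp only [Nat.zero_sub, Nat.cast_zero, mul_zero, neg_zero, Real.exp_zero, mul_one]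
        nlinarith [Real.one_le_exp hc.le]
      · have : ((n - 1 : ℕ) : ℝ) = (n : ℝ) - 1 := by
          rw [Nat.cast_sub hn]; norm_num
        rw [this, mul_assoc, ← Real.exp_add]
        have : c + -c * (n : ℝ) = -c * ((n : ℝ) - 1) := by ring
        rw [this]
    filter_upwards [htower, hb2] with ω h1 h2
    rw [h1]
    calc _ ≤ (μ[(fun _ => C * Real.exp (-c * (n - 1 : ℕ))) | mi]) ω := h2
      _ = C * Real.exp (-c * (n - 1 : ℕ)) := by rw [hb3]
      _ ≤ _ := hconst
  -- combine
  have hsum : μ[Set.indicator E (fun _ => (1 : ℝ)) | mi]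
      ≤ᵐ[μ] μ[∑ j ∈ Finset.Ico i (i + t), Set.indicator (A j) (fun _ => (1 : ℝ)) | mi] :=
    condExp_mono hEint (integrable_finset_sum' _ fun j _ => hAint j)
      (Filter.Eventually.of_forall fun ω => by
        rw [Finset.sum_apply]; exact hpt ω)
  have hsum2 : μ[∑ j ∈ Finset.Ico i (i + t), Set.indicator (A j) (fun _ => (1 : ℝ)) | mi]
      =ᵐ[μ] ∑ j ∈ Finset.Ico i (i + t), μ[Set.indicator (A j) (fun _ => (1 : ℝ)) | mi] :=
    condExp_finset_sum (fun j _ => hAint j) mi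
  have hallbound : ∀ᵐ ω ∂μ, ∀ j ∈ Finset.Ico i (i + t),
      (μ[Set.indicator (A j) (fun _ => (1 : ℝ)) | mi]) ω
        ≤ C * Real.exp c * Real.exp (-c * n) :=
    (ae_ball_iff (Finset.Ico i (i + t)).countable_toSet).mpr hAbound
  filter_upwards [hsum, hsum2, hallbound] with ω h1 h2 h3 _
  calc (μ[Set.indicator E (fun _ => (1 : ℝ)) | mi]) ω
      ≤ (μ[∑ j ∈ Finset.Ico i (i + t), Set.indicator (A j) (fun _ => (1 : ℝ)) | mi]) ω := h1
    _ = ∑ j ∈ Finset.Ico i (i + t),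
        (μ[Set.indicator (A j) (fun _ => (1 : ℝ)) | mi]) ω := by
          rw [h2]; simp
    _ ≤ ∑ _j ∈ Finset.Ico i (i + t), C * Real.exp c * Real.exp (-c * n) :=
        Finset.sum_le_sum h3
    _ = (t : ℝ) * (C * Real.exp c * Real.exp (-c * n)) := by
        rw [Finset.sum_const, Nat.card_Ico]; simp [nsmul_eq_mul]
    _ ≤ ((t : ℝ) + 1) * (C * Real.exp c * Real.exp (-c * n)) * (m : ℝ) ^ 2 := by
        have hm1 : (1 : ℝ) ≤ (m : ℝ) ^ 2 := by
          have h' : (1 : ℝ) ≤ (m : ℝ) := by exact_mod_cast hm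
          nlinarith
        have hexp : (0 : ℝ) < Real.exp (-c * n) := Real.exp_pos _
        have hec : (0 : ℝ) < Real.exp c := Real.exp_pos _
        have hX : (0 : ℝ) ≤ C * Real.exp c * Real.exp (-c * n) :=
          mul_nonneg (mul_nonneg (by linarith) hec.le) hexp.le
        have ht0 : (0 : ℝ) ≤ (t : ℝ) := Nat.cast_nonneg t
        nlinarith [mul_nonneg (mul_nonneg ht0 hX) (sub_nonneg.mpr hm1),
          mul_nonneg hX (sub_nonneg.mpr hm1)]
    _ = (t + 1) * C * Real.exp c * (m : ℝ) ^ 2 * Real.exp (-c * n) := by ring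
end
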